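/- arXiv:2301.11476 — 4 statements merged into one kernel-verified Lean document; each statement's English description precedes it below -/
import Mathlib

section
/- Let q ∈ ℝ with q ≠ 1, let n ≥ 1 and let x₁, …, xₙ be reals with 1 + (q−1)xᵢ ≥ 0 for every i and 1 + (q−1)·∑ᵢ xᵢ ≥ 0. Then (∏ᵢ₌₁ⁿ exp_q xᵢ)^{q−1} = (exp_q(∑ᵢ₌₁ⁿ xᵢ))^{q−1} + ∑_{j=2}^{n} (q−1)^j · e_j(x₁,…,xₙ). -/
/-!
Since `(exp_q z)^(q-1) = 1 + (q-1) z` whenever `1 + (q-1) z ≥ 0`, the left-hand side is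
`∏ᵢ (1 + (q-1) xᵢ)`, which expands as `∑ⱼ (q-1)^j e_j(x)`; the terms `j = 0, 1` of this
expansion are exactly `(exp_q (∑ᵢ xᵢ))^(q-1) = 1 + (q-1) ∑ᵢ xᵢ`.
-/

/-- The q-exponential: for `q ≠ 1`, `exp_q z = (max(1 + (q-1)z, 0))^(1/(q-1))`. -/
noncomputable def qexp (q z : ℝ) : ℝ := (max (1 + (q - 1) * z) 0) ^ (1 / (q - 1))

/-- The j-th elementary symmetric polynomial `e_j(x₁,…,xₙ) = ∑_{i₁<⋯<i_j} x_{i₁}⋯x_{i_j}`. -/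
noncomputable def esymm {n : ℕ} (j : ℕ) (x : Fin n → ℝ) : ℝ :=
  ∑ t ∈ Finset.univ.powersetCard j, ∏ i ∈ t, x i

open Finset

lemma qexp_nonneg (q z : ℝ) : 0 ≤ qexp q z :=
  Real.rpow_nonneg (le_max_right _ _) _

lemma qexp_rpow_sub_one {q z : ℝ} (h : 0 ≤ 1 + (q - 1) * z) :
    qexp q z ^ (q - 1) = 1 + (q - 1) * z := by
  rcases eq_or_ne q 1 with rfl | hq
  · simp
  rw [qexp, max_eq_left h, ← Real.rpow_mul h, one_div_mul_cancel (sub_ne_zero.mpr hq),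
    Real.rpow_one]

lemma prod_qexp_rpow_sub_one {ι : Type*} (s : Finset ι) {q : ℝ} {x : ι → ℝ}
    (hx : ∀ i ∈ s, 0 ≤ 1 + (q - 1) * x i) :
    (∏ i ∈ s, qexp q (x i)) ^ (q - 1) = ∏ i ∈ s, (1 + (q - 1) * x i) := by
  rw [← Real.finsetProd_rpow s _ (fun i _ => qexp_nonneg q (x i))]
  exact prod_congr rfl fun i hi => qexp_rpow_sub_one (hx i hi)

section esymm

variable {n : ℕ} (x : Fin n → ℝ)

@[simp]
lemma esymm_zero : esymm 0 x = 1 := by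
  simp [esymm]

@[simp]
lemma esymm_one : esymm 1 x = ∑ i, x i := by
  simp [esymm, powersetCard_one]

lemma esymm_eq_zero_of_lt {j : ℕ} (hj : n < j) : esymm j x = 0 := by
  rw [esymm, powersetCard_eq_empty.mpr (by simpa using hj), sum_empty]

lemma prod_one_add_mul_eq_sum_esymm (c : ℝ) :
    ∏ i, (1 + c * x i) = ∑ j ∈ range (n + 1), c ^ j * esymm j x := by
  rw [prod_one_add, sum_powerset, card_univ, Fintype.card_fin]
  refine sum_congr rfl fun j _ => ?_
  rw [esymm, mul_sum]
  refine sum_congr rfl fun t ht => ?_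
  rw [prod_mul_distrib, prod_const, (mem_powersetCard.mp ht).2]

lemma prod_one_add_mul_eq (c : ℝ) :
    ∏ i, (1 + c * x i) = 1 + c * ∑ i, x i + ∑ j ∈ Icc 2 n, c ^ j * esymm j x := by
  have hsub : range (n + 1) ⊆ insert 0 (insert 1 (Icc 2 n)) := by
    intro j hj
    simp only [mem_range, mem_insert, mem_Icc] at hj ⊢
    omega
  rw [prod_one_add_mul_eq_sum_esymm, sum_subset hsub fun j _ hj => by
    rw [esymm_eq_zero_of_lt x (by simpa using hj), mul_zero]]
  rw [sum_insert (by simp), sum_insert (by simp)]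
  simp [add_assoc]

end esymm

theorem qexp_prod_expansion_general (q : ℝ) (n : ℕ) (x : Fin n → ℝ)
    (hx : ∀ i, 0 ≤ 1 + (q - 1) * x i) (hsum : 0 ≤ 1 + (q - 1) * ∑ i, x i) :
    (∏ i, qexp q (x i)) ^ (q - 1)
      = (qexp q (∑ i, x i)) ^ (q - 1)
        + ∑ j ∈ Finset.Icc 2 n, (q - 1) ^ j * esymm j x := by
  rw [prod_qexp_rpow_sub_one univ fun i _ => hx i, qexp_rpow_sub_one hsum,
    prod_one_add_mul_eq]

/-- Generalized multi-point property of the q-exponential: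
`(∏ᵢ exp_q xᵢ)^(q−1) = (exp_q(∑ᵢ xᵢ))^(q−1) + ∑_{j=2}^{n} (q−1)^j · e_j(x₁,…,xₙ)`. -/
theorem qexp_prod_expansion (q : ℝ) (hq : q ≠ 1) (n : ℕ) (hn : 1 ≤ n) (x : Fin n → ℝ)
    (hx : ∀ i, 0 ≤ 1 + (q - 1) * x i) (hsum : 0 ≤ 1 + (q - 1) * ∑ i, x i) :
    (∏ i, qexp q (x i)) ^ (q - 1)
      = (qexp q (∑ i, x i)) ^ (q - 1)
        + ∑ j ∈ Finset.Icc 2 n, (q - 1) ^ j * esymm j x :=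
  qexp_prod_expansion_general q n x hx hsum
end

section
/- Let q ∈ ℝ with q ≠ 1, let k ≥ 1 and let x₁, …, x_k be reals. Write S₀ = 0 and S_j = x₁ + ⋯ + x_j, and assume 1 + (q−1)S_j > 0 for every j = 1, …, k. Then exp_q(S_k) = ∏_{j=1}^{k} exp_q( x_j / (1 + (q−1)S_{j−1}) ). -/
open Finset

lemma qexp_zero (q : ℝ) : qexp q 0 = 1 := by
  simp [qexp]

lemma qexp_of_pos {q z : ℝ} (hz : 0 < 1 + (q - 1) * z) :
    qexp q z = (1 + (q - 1) * z) ^ (1 / (q - 1)) := by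
  rw [qexp, max_eq_left hz.le]

lemma qexp_add_eq_mul {q a b : ℝ} (ha : 0 < 1 + (q - 1) * a) (hab : 0 < 1 + (q - 1) * (a + b)) :
    qexp q (a + b) = qexp q a * qexp q (b / (1 + (q - 1) * a)) := by
  have hfactor : 1 + (q - 1) * (a + b)
      = (1 + (q - 1) * a) * (1 + (q - 1) * (b / (1 + (q - 1) * a))) := by
    field_simp
    ring
  have hb : 0 < 1 + (q - 1) * (b / (1 + (q - 1) * a)) :=
    pos_of_mul_pos_right (hfactor ▸ hab) ha.le
  rw [qexp_of_pos hab, qexp_of_pos ha, qexp_of_pos hb, hfactor, Real.mul_rpow ha.le hb.le]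

lemma qexp_sum_range_eq_prod (q : ℝ) (x : ℕ → ℝ) (k : ℕ)
    (hS : ∀ j ≤ k, 0 < 1 + (q - 1) * ∑ i ∈ range j, x i) :
    qexp q (∑ i ∈ range k, x i)
      = ∏ j ∈ range k, qexp q (x j / (1 + (q - 1) * ∑ i ∈ range j, x i)) := by
  induction k with
  | zero => simp [qexp_zero]
  | succ n ih =>
    rw [prod_range_succ, ← ih fun j hj => hS j (by omega), sum_range_succ,
      qexp_add_eq_mul (hS n (by omega)) (sum_range_succ x n ▸ hS (n + 1) le_rfl)]

theorem qexp_sum_weighted_prod_general (q : ℝ) (k : ℕ) (x : ℕ → ℝ)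
    (hS : ∀ j, 1 ≤ j → j ≤ k → 0 < 1 + (q - 1) * ∑ i ∈ Finset.range j, x i) :
    qexp q (∑ i ∈ Finset.range k, x i)
      = ∏ j ∈ Finset.range k, qexp q (x j / (1 + (q - 1) * ∑ i ∈ Finset.range j, x i)) := by
  refine qexp_sum_range_eq_prod q x k fun j hj => ?_
  rcases Nat.eq_zero_or_pos j with rfl | hj0
  · simp
  · exact hS j hj0 hj

/-- Weighted-average decomposition of the q-exponential of a sum:
with partial sums `S_j = x₁ + ⋯ + x_j` (here `S j = ∑_{i < j} x i` with 0-based indexing,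
so `Finset.range j` sums the first `j` terms), if `1 + (q−1)S_j > 0` for `j = 1, …, k`, then
`exp_q(S_k) = ∏_{j=1}^{k} exp_q( x_j / (1 + (q−1)S_{j−1}) )`. -/
theorem qexp_sum_weighted_prod (q : ℝ) (hq : q ≠ 1) (k : ℕ) (hk : 1 ≤ k) (x : ℕ → ℝ)
    (hS : ∀ j, 1 ≤ j → j ≤ k → 0 < 1 + (q - 1) * ∑ i ∈ Finset.range j, x i) :
    qexp q (∑ i ∈ Finset.range k, x i)
      = ∏ j ∈ Finset.range k, qexp q (x j / (1 + (q - 1) * ∑ i ∈ Finset.range j, x i)) :=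
  qexp_sum_weighted_prod_general q k x hS
end

section
/- Let q > 1, let A be a finite nonempty set, let Q : A → ℝ, and let μ be a full-support probability distribution on A. Suppose π* is a full-support probability distribution on A that maximizes the function π ↦ ∑_{a∈A} π(a)·Q(a) − D_q(π‖μ) over all probability distributions on A. Then there exists a constant c ∈ ℝ such that for every a ∈ A: q·ln_q(π*(a)/μ(a)) = Q(a) − c. -/
/-!
Perturbing the maximizer `π*` along `e_a - e_b` keeps it a probability distribution for small
steps, because `π*` has full support. The objective is a sum of one-variable functions of the
coordinates, so its derivative along that line is the difference of the coordinate derivatives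
at `a` and at `b`, and it vanishes at the maximum. For `x ↦ x·Q(a) − x·ln_q(x/μ(a))` that
derivative is `Q(a) − q·ln_q(π*(a)/μ(a)) − 1`, which is therefore independent of `a`.
-/

open Finset Filter Topology

noncomputable def qlog (q x : ℝ) : ℝ := (x ^ (q - 1) - 1) / (q - 1)

lemma rpow_sub_one_eq_qlog {q : ℝ} (hq : q ≠ 1) (x : ℝ) :
    x ^ (q - 1) = (q - 1) * qlog q x + 1 := by
  have : q - 1 ≠ 0 := sub_ne_zero.2 hq
  unfold qlog
  field_simp
  ring

lemma hasDerivAt_qlog {q x : ℝ} (hq : q ≠ 1) (hx : 0 < x) :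
    HasDerivAt (qlog q) (x ^ (q - 2)) x := by
  have hq1 : q - 1 ≠ 0 := sub_ne_zero.2 hq
  have h := ((Real.hasDerivAt_rpow_const (p := q - 1) (Or.inl hx.ne')).sub_const 1).div_const
    (q - 1)
  exact h.congr_deriv (by rw [mul_div_cancel_left₀ _ hq1]; ring_nf)

lemma hasDerivAt_mul_qlog_div {q x m : ℝ} (hq : q ≠ 1) (hxm : 0 < x / m) :
    HasDerivAt (fun y => y * qlog q (y / m)) (q * qlog q (x / m) + 1) x := by
  have hqlog := (hasDerivAt_qlog hq hxm).comp x ((hasDerivAt_id x).div_const m)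
  have hpow : x / m * (x / m) ^ (q - 2) = (x / m) ^ (q - 1) := by
    rw [← Real.rpow_one_add' hxm.le (by contrapose! hq; linarith)]
    ring_nf
  refine ((hasDerivAt_id x).mul hqlog).congr_deriv ?_
  symm
  calc q * qlog q (x / m) + 1 = qlog q (x / m) + (x / m) ^ (q - 1) := by
        rw [rpow_sub_one_eq_qlog hq]; ring
    _ = _ := by rw [← hpow]; simp only [Function.comp_def, id]; ring

section Simplex

variable {A : Type*} [Fintype A]

lemma eventually_add_smul_mem_stdSimplex {p d : A → ℝ} (hp : p ∈ stdSimplex ℝ A)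
    (hpos : ∀ a, 0 < p a) (hd : ∑ a, d a = 0) :
    ∀ᶠ t in 𝓝 (0 : ℝ), p + t • d ∈ stdSimplex ℝ A := by
  have hnonneg : ∀ᶠ t in 𝓝 (0 : ℝ), ∀ a, 0 ≤ p a + t * d a := by
    refine eventually_all.2 fun a => ?_
    have hcont : Continuous fun t : ℝ => p a + t * d a := by fun_prop
    have hlim := hcont.tendsto 0
    simp only [zero_mul, add_zero] at hlim
    exact (hlim.eventually (lt_mem_nhds (hpos a))).mono fun _ => le_of_lt
  filter_upwards [hnonneg] with t ht
  refine ⟨ht, ?_⟩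
  simp only [Pi.add_apply, Pi.smul_apply, smul_eq_mul]
  rw [sum_add_distrib, ← mul_sum, hd, hp.2, mul_zero, add_zero]

lemma IsMaxOn.hasDerivAt_eq_of_stdSimplex {f : A → ℝ → ℝ} {f' : A → ℝ} {p : A → ℝ}
    (hmax : IsMaxOn (fun p => ∑ a, f a (p a)) (stdSimplex ℝ A) p) (hp : p ∈ stdSimplex ℝ A)
    (hpos : ∀ a, 0 < p a) (hf : ∀ a, HasDerivAt (f a) (f' a) (p a)) (a b : A) :
    f' a = f' b := by
  classical
  set d : A → ℝ := Pi.single a 1 - Pi.single b 1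
  have hsum : ∀ g : A → ℝ, ∑ x, d x * g x = g a - g b := by
    intro g
    simp [d, Pi.single_apply, sub_mul, sum_sub_distrib]
  have hd : ∑ x, d x = 0 := by simpa using hsum 1
  have hline : HasDerivAt (fun t : ℝ => ∑ x, f x (p x + t * d x)) (∑ x, d x * f' x) 0 := by
    refine HasDerivAt.fun_sum fun x _ => ?_
    have hx : HasDerivAt (fun t : ℝ => p x + t * d x) (d x) 0 := by
      simpa using ((hasDerivAt_id (0 : ℝ)).mul_const (d x)).const_add (p x)
    exact (hf x).scomp_of_eq 0 hx (by simp)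
  have hlocal : IsLocalMax (fun t : ℝ => ∑ x, f x (p x + t * d x)) 0 := by
    filter_upwards [eventually_add_smul_mem_stdSimplex hp hpos hd] with t ht
    simpa using hmax ht
  have hzero := hlocal.hasDerivAt_eq_zero hline
  rw [hsum] at hzero
  linarith

end Simplex

theorem tsallisKL_regularized_optimality_general {A : Type*} [Fintype A]
    (q : ℝ) (hq : 1 < q) (Q : A → ℝ)
    (mu : A → ℝ) (hmu0 : ∀ a, 0 < mu a)
    (pstar : A → ℝ) (hps0 : ∀ a, 0 < pstar a) (hps1 : ∑ a, pstar a = 1)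
    (hmax : ∀ p : A → ℝ, (∀ a, 0 ≤ p a) → ∑ a, p a = 1 →
      (∑ a, p a * Q a) - (∑ a, (if p a = 0 then 0 else p a * qlog q (p a / mu a)))
        ≤ (∑ a, pstar a * Q a)
          - (∑ a, (if pstar a = 0 then 0 else pstar a * qlog q (pstar a / mu a)))) :
    ∃ c : ℝ, ∀ a, q * qlog q (pstar a / mu a) = Q a - c := by
  set f : A → ℝ → ℝ := fun a x => x * Q a - if x = 0 then 0 else x * qlog q (x / mu a)
  have hmaxOn : IsMaxOn (fun p => ∑ a, f a (p a)) (stdSimplex ℝ A) pstar :=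
    isMaxOn_iff.2 fun p hp => by simpa only [f, sum_sub_distrib] using hmax p hp.1 hp.2
  have hderiv : ∀ a, HasDerivAt (f a) (Q a - (q * qlog q (pstar a / mu a) + 1)) (pstar a) := by
    intro a
    have hreg : (fun x => x * Q a - x * qlog q (x / mu a)) =ᶠ[𝓝 (pstar a)] f a := by
      filter_upwards [eventually_ne_nhds (hps0 a).ne'] with x hx
      simp [f, hx]
    refine HasDerivAt.congr_of_eventuallyEq ?_ hreg.symm
    simpa using ((hasDerivAt_id _).mul_const (Q a)).fun_sub
      (hasDerivAt_mul_qlog_div hq.ne' (div_pos (hps0 a) (hmu0 a)))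
  have hconst := hmaxOn.hasDerivAt_eq_of_stdSimplex ⟨fun a => (hps0 a).le, hps1⟩ hps0 hderiv
  rcases isEmpty_or_nonempty A with _ | ⟨⟨a₀⟩⟩
  · exact ⟨0, isEmptyElim⟩
  · exact ⟨Q a₀ - q * qlog q (pstar a₀ / mu a₀), fun a => by linarith [hconst a a₀]⟩

/-- First-order optimality condition for Tsallis-KL-regularized policy optimization:
if the full-support probability distribution `π*` maximizes
`π ↦ ∑_a π(a)·Q(a) − D_q(π‖μ)` over all probability distributions on `A`
(where `D_q(π‖μ) = ∑_a π(a)·ln_q(π(a)/μ(a))`, terms with `π(a) = 0` counting as `0`),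
then there is a constant `c` with `q·ln_q(π*(a)/μ(a)) = Q(a) − c` for all `a`. -/
theorem tsallisKL_regularized_optimality {A : Type*} [Fintype A] [Nonempty A]
    (q : ℝ) (hq : 1 < q) (Q : A → ℝ)
    (mu : A → ℝ) (hmu0 : ∀ a, 0 < mu a) (hmu1 : ∑ a, mu a = 1)
    (pstar : A → ℝ) (hps0 : ∀ a, 0 < pstar a) (hps1 : ∑ a, pstar a = 1)
    (hmax : ∀ p : A → ℝ, (∀ a, 0 ≤ p a) → ∑ a, p a = 1 →
      (∑ a, p a * Q a) - (∑ a, (if p a = 0 then 0 else p a * qlog q (p a / mu a)))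
        ≤ (∑ a, pstar a * Q a)
          - (∑ a, (if pstar a = 0 then 0 else pstar a * qlog q (pstar a / mu a)))) :
    ∃ c : ℝ, ∀ a, q * qlog q (pstar a / mu a) = Q a - c :=
  tsallisKL_regularized_optimality_general q hq Q mu hmu0 pstar hps0 hps1 hmax
end

section
/- Let S and A be finite nonempty sets, let r : S × A → ℝ, let P assign to each (s,a) ∈ S × A a probability distribution P(·|s,a) on S, and let γ, α, τ ∈ ℝ. Let π_k and π_{k+1} assign to each s ∈ S a full-support probability distribution on A, and let Q_k, Q_{k+1} : S × A → ℝ. Define Q'_i(s,a) = Q_i(s,a) − α·τ·ln π_i(a|s) for i ∈ {k, k+1}, KL(s) = ∑_{a∈A} π_{k+1}(a|s)·(ln π_{k+1}(a|s) − ln π_k(a|s)), and H(s) = −∑_{a∈A} π_{k+1}(a|s)·ln π_{k+1}(a|s). Then the Munchausen update Q_{k+1}(s,a) = r(s,a) + α·τ·ln π_{k+1}(a|s) + γ·∑_{s'∈S} P(s'|s,a)·∑_{a'∈A} π_{k+1}(a'|s')·(Q_k(s',a') − τ·ln π_{k+1}(a'|s')) holds for all (s,a) ∈ S × A if and only if the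 implicitly KL-regularized update Q'_{k+1}(s,a) = r(s,a) + γ·∑_{s'∈S} P(s'|s,a)·( ∑_{a'∈A} π_{k+1}(a'|s')·Q'_k(s',a') − α·τ·KL(s') + (1−α)·τ·H(s') ) holds for all (s,a) ∈ S × A. -/
open Finset

/-- Equivalence between the Munchausen value-iteration update and the implicitly
KL- and entropy-regularized update: with `Q'_i(s,a) = Q_i(s,a) − α·τ·ln π_i(a|s)`,
`KL(s') = D_KL(π_{k+1}(·|s') ‖ π_k(·|s'))` and `H(s')` the Shannon entropy of
`π_{k+1}(·|s')`, the update
`Q_{k+1} = r + α·τ·ln π_{k+1} + γ·P⟨π_{k+1}, Q_k − τ·ln π_{k+1}⟩`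
holds for all `(s,a)` iff
`Q'_{k+1} = r + γ·P(⟨π_{k+1}, Q'_k⟩ − α·τ·KL + (1−α)·τ·H)` holds for all `(s,a)`. -/
theorem munchausen_iff_implicit_kl
    {S A : Type*} [Fintype S] [Fintype A] [Nonempty S] [Nonempty A]
    (r : S × A → ℝ) (P : S × A → S → ℝ)
    (hP0 : ∀ sa s', 0 ≤ P sa s') (hP1 : ∀ sa, ∑ s', P sa s' = 1)
    (γ α τ : ℝ)
    (pk pk1 : S → A → ℝ)
    (hpk : ∀ s, (∀ a, 0 < pk s a) ∧ ∑ a, pk s a = 1)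
    (hpk1 : ∀ s, (∀ a, 0 < pk1 s a) ∧ ∑ a, pk1 s a = 1)
    (Qk Qk1 : S × A → ℝ) :
    (∀ s a, Qk1 (s, a)
        = r (s, a) + α * τ * Real.log (pk1 s a)
          + γ * ∑ s', P (s, a) s'
              * ∑ a', pk1 s' a' * (Qk (s', a') - τ * Real.log (pk1 s' a')))
    ↔
    (∀ s a, Qk1 (s, a) - α * τ * Real.log (pk1 s a)
        = r (s, a)
          + γ * ∑ s', P (s, a) s'
              * ((∑ a', pk1 s' a' * (Qk (s', a') - α * τ * Real.log (pk s' a')))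
                - α * τ * (∑ a', pk1 s' a' * (Real.log (pk1 s' a') - Real.log (pk s' a')))
                + (1 - α) * τ * (-∑ a', pk1 s' a' * Real.log (pk1 s' a')))) := by
  have key : ∀ s' : S,
      ((∑ a', pk1 s' a' * (Qk (s', a') - α * τ * Real.log (pk s' a')))
        - α * τ * (∑ a', pk1 s' a' * (Real.log (pk1 s' a') - Real.log (pk s' a')))
        + (1 - α) * τ * (-∑ a', pk1 s' a' * Real.log (pk1 s' a')))
      = ∑ a', pk1 s' a' * (Qk (s', a') - τ * Real.log (pk1 s' a')) := by
    intro s'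
    have h1 : ∑ x, pk1 s' x * (α * τ * Real.log (pk s' x))
        = α * τ * ∑ x, pk1 s' x * Real.log (pk s' x) := by
      rw [Finset.mul_sum]; exact Finset.sum_congr rfl fun x _ => by ring
    have h2 : ∑ x, pk1 s' x * (τ * Real.log (pk1 s' x))
        = τ * ∑ x, pk1 s' x * Real.log (pk1 s' x) := by
      rw [Finset.mul_sum]; exact Finset.sum_congr rfl fun x _ => by ring
    simp only [mul_sub, Finset.sum_sub_distrib, ← Finset.mul_sum]
    rw [h1, h2]; ring
  constructor
  · intro h s a
    rw [h s a]
    simp only [key]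
    ring
  · intro h s a
    have := h s a
    simp only [key] at this
    linarith
end
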